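/- arXiv:2202.01253 — 5 statements merged into one kernel-verified Lean document; each statement's English description precedes it below -/
import Mathlib

section
/- Let R be an integral domain and consider the polynomial ring R[u, x₁, x₂, …] in a variable u and countably many variables xᵢ. Let p₁, p₂, … ∈ R[x₁, x₂, …] be polynomials not involving u, and let I be the ideal of R[u, x₁, x₂, …] generated by the elements u·xᵢ + pᵢ for i ≥ 1. Then the elimination ideal I ∩ R[x₁, x₂, …] is equal to the ideal J of R[x₁, x₂, …] generated by the elements xᵢ·pⱼ − xⱼ·pᵢ for i, j ≥ 1. -/
/-!
Write `A = R[x₁, x₂, …]`, so that `R[u, x₁, x₂, …] = A[u]`. If `f = ∑ cᵢ (u xᵢ + pᵢ)` with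
`cᵢ ∈ A[u]`, comparing coefficients of `uᵏ` gives `∑ cᵢₖ xᵢ + ∑ cᵢ₍ₖ₊₁₎ pᵢ = 0` and
`f = ∑ cᵢ₀ pᵢ`. Descending induction on `k` then shows `∑ cᵢₖ pᵢ ∈ J` for every `k`, because
`∑ hᵢ xᵢ ∈ J` implies `∑ hᵢ pᵢ ∈ J`. Modulo the relations `pⱼ eᵢ - pᵢ eⱼ` this reduces to the case
`∑ hᵢ xᵢ = 0`, which holds since the syzygies of the variables are generated by the Koszul
relations `xⱼ eᵢ - xᵢ eⱼ`.
-/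

open Finsupp

def minorIdeal {ι A : Type*} [CommRing A] (x p : ι → A) : Ideal A :=
  Ideal.span {f | ∃ i j, f = x i * p j - x j * p i}

theorem comap_minorIdeal_le_of_ker_le {ι A : Type*} [CommRing A] (x p : ι → A)
    (h : LinearMap.ker (linearCombination A x) ≤
      Submodule.comap (linearCombination A p) (minorIdeal x p)) :
    Submodule.comap (linearCombination A x) (minorIdeal x p) ≤
      Submodule.comap (linearCombination A p) (minorIdeal x p) := by
  intro c hc
  let L : Submodule A (ι →₀ A) :=
    Submodule.span A (Set.range fun ij : ι × ι => single ij.1 (p ij.2) - single ij.2 (p ij.1))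
  have hJL : minorIdeal x p ≤ L.map (linearCombination A x) := by
    refine Ideal.span_le.mpr ?_
    rintro _ ⟨i, j, rfl⟩
    exact ⟨_, Submodule.subset_span ⟨(i, j), rfl⟩, by simp [mul_comm]⟩
  have hL : L ≤ LinearMap.ker (linearCombination A p) := by
    refine Submodule.span_le.mpr ?_
    rintro _ ⟨⟨i, j⟩, rfl⟩
    simp [mul_comm]
  obtain ⟨l, hlL, hl⟩ := hJL hc
  have hcl : c - l ∈ LinearMap.ker (linearCombination A x) := by simp [hl]
  simpa [LinearMap.mem_ker.mp (hL hlL)] using h hcl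

namespace MvPolynomial

variable {σ R : Type*} [CommRing R]

theorem X_dvd_sub_aeval_update [DecidableEq σ] (j : σ) (f : MvPolynomial σ R) :
    X j ∣ f - aeval (Function.update X j 0) f := by
  let π := Ideal.Quotient.mkₐ R (Ideal.span {(X j : MvPolynomial σ R)})
  have hπ : π.comp (aeval (Function.update X j 0)) = π := by
    ext k
    by_cases hk : k = j
    · subst hk
      simp [π]
    · simp [π, hk]
  rw [← Ideal.mem_span_singleton, ← Ideal.Quotient.eq]
  exact (DFunLike.congr_fun hπ f).symm

theorem sum_mul_mem_minorIdeal_of_sum_mul_X_eq_zero (p : σ → MvPolynomial σ R)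
    (s : Finset σ) (h : σ → MvPolynomial σ R) (hs : ∑ i ∈ s, h i * X i = 0) :
    ∑ i ∈ s, h i * p i ∈ minorIdeal X p := by
  classical
  induction s using Finset.induction_on generalizing h with
  | empty => simp
  | insert j s hj ih =>
    rw [Finset.sum_insert hj] at hs ⊢
    -- Setting `X j = 0` turns `h` into a syzygy supported on `s`; what is left is a multiple
    -- of `X j`, which forces `h j = -∑ qᵢ Xᵢ`.
    let φ : MvPolynomial σ R →ₐ[R] MvPolynomial σ R := aeval (Function.update X j 0)
    choose q hq using fun i => X_dvd_sub_aeval_update j (h i)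
    have hdecomp : ∀ i, h i = X j * q i + φ (h i) := fun i => by linear_combination hq i
    have hφs : ∑ i ∈ s, φ (h i) * X i = 0 := by
      have := congrArg φ hs
      rw [map_add, map_sum, map_zero, map_mul, show φ (X j) = 0 by simp [φ], mul_zero,
        zero_add] at this
      rw [← this]
      refine Finset.sum_congr rfl fun i hi => ?_
      simp [φ, ne_of_mem_of_not_mem hi hj]
    have hhj : h j = -∑ i ∈ s, q i * X i := by
      have hsplit : ∑ i ∈ s, h i * X i = X j * ∑ i ∈ s, q i * X i + ∑ i ∈ s, φ (h i) * X i := by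
        rw [Finset.mul_sum, ← Finset.sum_add_distrib]
        exact Finset.sum_congr rfl fun i _ => by linear_combination X i * hdecomp i
      rw [← X_mul_cancel_left_iff (i := j)]
      linear_combination hs - hsplit - hφs
    have hsum : h j * p j + ∑ i ∈ s, h i * p i
        = ∑ i ∈ s, q i * (X j * p i - X i * p j) + ∑ i ∈ s, φ (h i) * p i := by
      have hterm : ∀ i, h i * p i
          = q i * (X j * p i - X i * p j) + φ (h i) * p i + q i * X i * p j := fun i => by
        linear_combination p i * hdecomp i
      rw [hhj, neg_mul, Finset.sum_mul]
      simp only [hterm, Finset.sum_add_distrib]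
      ring
    rw [hsum]
    refine add_mem (Ideal.sum_mem _ fun i _ => Ideal.mul_mem_left _ _ ?_) (ih _ hφs)
    exact Ideal.subset_span ⟨j, i, rfl⟩

theorem ker_linearCombination_X_le (p : σ → MvPolynomial σ R) :
    LinearMap.ker (linearCombination _ (X : σ → MvPolynomial σ R)) ≤
      Submodule.comap (linearCombination _ p) (minorIdeal X p) := by
  intro c hc
  rw [LinearMap.mem_ker, linearCombination_apply, Finsupp.sum] at hc
  simp only [smul_eq_mul] at hc
  simpa [linearCombination_apply, Finsupp.sum] using
    sum_mul_mem_minorIdeal_of_sum_mul_X_eq_zero p c.support c hc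

theorem optionEquivLeft_rename_some (f : MvPolynomial σ R) :
    optionEquivLeft R σ (rename some f) = Polynomial.C f := by
  induction f using MvPolynomial.induction_on with
  | C a => simp
  | add f g hf hg => simp [hf, hg]
  | mul_X f i hf => simp [hf]

theorem comap_rename_some_eq_comap_C (I : Ideal (MvPolynomial (Option σ) R)) :
    I.comap (rename some) = (I.map (optionEquivLeft R σ)).comap Polynomial.C := by
  ext f
  rw [Ideal.mem_comap, Ideal.mem_comap, ← optionEquivLeft_rename_some]
  exact (Ideal.apply_mem_of_equiv_iff (f := (optionEquivLeft R σ).toRingEquiv)).symm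

end MvPolynomial

namespace Polynomial

variable {ι A : Type*} [CommRing A]

theorem coeff_linearCombination_C (y : ι → A) (c : ι →₀ A[X]) (k : ℕ) :
    (linearCombination A[X] (fun i => C (y i)) c).coeff k =
      linearCombination A y (c.mapRange (·.coeff k) (coeff_zero k)) := by
  rw [linearCombination_apply, linearCombination_apply, sum_mapRange_index (by simp)]
  simp [Finsupp.sum, finsetSum_coeff, coeff_mul_C]

theorem minorIdeal_le_comap_C_span (x p : ι → A) :
    minorIdeal x p ≤
      Ideal.comap (C : A →+* A[X]) (Ideal.span (Set.range fun i => X * C (x i) + C (p i))) := by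
  refine Ideal.span_le.mpr ?_
  rintro _ ⟨i, j, rfl⟩
  rw [SetLike.mem_coe, Ideal.mem_comap]
  have hg : ∀ k, X * C (x k) + C (p k) ∈
      Ideal.span (Set.range fun i => X * C (x i) + C (p i)) :=
    fun k => Ideal.subset_span ⟨k, rfl⟩
  convert sub_mem (Ideal.mul_mem_left _ (C (x i)) (hg j)) (Ideal.mul_mem_left _ (C (x j)) (hg i))
    using 1
  simp only [map_sub, map_mul]
  ring

theorem comap_C_span_X_mul_C_add_C (x p : ι → A)
    (hxp : LinearMap.ker (linearCombination A x) ≤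
      Submodule.comap (linearCombination A p) (minorIdeal x p)) :
    Ideal.comap (C : A →+* A[X]) (Ideal.span (Set.range fun i => X * C (x i) + C (p i))) =
      minorIdeal x p := by
  refine le_antisymm (fun f hf => ?_) (minorIdeal_le_comap_C_span x p)
  change C f ∈ Submodule.span A[X] _ at hf
  rw [← range_linearCombination] at hf
  obtain ⟨c, hc⟩ := hf
  let d : ℕ → ι →₀ A := fun k => c.mapRange (·.coeff k) (coeff_zero k)
  have hcf : X * linearCombination A[X] (fun i => C (x i)) c +
      linearCombination A[X] (fun i => C (p i)) c = C f := by
    rw [← hc]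
    simp only [linearCombination_apply, Finsupp.sum, smul_eq_mul, Finset.mul_sum,
      ← Finset.sum_add_distrib]
    exact Finset.sum_congr rfl fun i _ => by ring
  have h0 : linearCombination A p (d 0) = f := by
    simpa [coeff_linearCombination_C] using congrArg (coeff · 0) hcf
  have hsucc : ∀ k, linearCombination A x (d k) + linearCombination A p (d (k + 1)) = 0 :=
    fun k => by simpa [coeff_linearCombination_C] using congrArg (coeff · (k + 1)) hcf
  obtain ⟨N, hN⟩ : ∃ N, d N = 0 := by
    refine ⟨c.support.sup (fun i => (c i).natDegree) + 1, Finsupp.ext fun i => ?_⟩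
    by_cases hi : i ∈ c.support
    · exact coeff_eq_zero_of_natDegree_lt
        (Nat.lt_succ_of_le (Finset.le_sup (f := fun i => (c i).natDegree) hi))
    · simp [d, Finsupp.notMem_support_iff.mp hi]
  have hd : ∀ k ≤ N, linearCombination A p (d k) ∈ minorIdeal x p := fun k hk => by
    induction hk using Nat.decreasingInduction with
    | self => simp [hN]
    | of_succ k _ ih =>
      refine comap_minorIdeal_le_of_ker_le x p hxp (Submodule.mem_comap.mpr ?_)
      rw [eq_neg_of_add_eq_zero_left (hsucc k)]
      exact neg_mem ih
  simpa [h0] using hd 0 N.zero_le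

end Polynomial

theorem stmt_1_general {R : Type*} [CommRing R] (p : ℕ → MvPolynomial ℕ R) :
    Ideal.comap (MvPolynomial.rename (some : ℕ → Option ℕ))
      (Ideal.span {f : MvPolynomial (Option ℕ) R | ∃ i : ℕ,
        f = MvPolynomial.X none * MvPolynomial.X (some i)
            + MvPolynomial.rename (some : ℕ → Option ℕ) (p i)})
    = Ideal.span {f : MvPolynomial ℕ R | ∃ i j : ℕ,
        f = MvPolynomial.X i * p j - MvPolynomial.X j * p i} := by
  rw [MvPolynomial.comap_rename_some_eq_comap_C, Ideal.map_span]
  refine (congrArg (fun s => Ideal.comap Polynomial.C (Ideal.span s)) ?_).trans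
    (Polynomial.comap_C_span_X_mul_C_add_C _ p (MvPolynomial.ker_linearCombination_X_le p))
  ext g
  simp [eq_comm, MvPolynomial.optionEquivLeft_rename_some]

/-- Elimination lemma: over a domain `R`, in `R[u, x₁, x₂, …]`, the elimination ideal
`I ∩ R[x₁, x₂, …]` of the ideal `I = (u·xᵢ + pᵢ : i)` (with `pᵢ ∈ R[x₁, x₂, …]`)
is the ideal generated by the elements `xᵢ pⱼ - xⱼ pᵢ`.  The polynomial ring
`R[u, x₁, x₂, …]` is modelled as `MvPolynomial (Option ℕ) R` with `u = X none` and
`xᵢ = X (some i)`; the subring `R[x₁, x₂, …]` is embedded by `rename some`, and the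
intersection is expressed as an ideal comap along this (injective) embedding. -/
theorem stmt_1 {R : Type*} [CommRing R] [IsDomain R] (p : ℕ → MvPolynomial ℕ R) :
    Ideal.comap (MvPolynomial.rename (some : ℕ → Option ℕ))
      (Ideal.span {f : MvPolynomial (Option ℕ) R | ∃ i : ℕ,
        f = MvPolynomial.X none * MvPolynomial.X (some i)
            + MvPolynomial.rename (some : ℕ → Option ℕ) (p i)})
    = Ideal.span {f : MvPolynomial ℕ R | ∃ i j : ℕ,
        f = MvPolynomial.X i * p j - MvPolynomial.X j * p i} :=
  stmt_1_general p
end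

section
/- Let A be a commutative ring and F(y, z) ∈ A[[y, z]] a formal group law, so F(y, 0) = y, F(0, z) = z, F is commutative and associative. Write F(u, x) as a power series in x with coefficients in A[[u]]; its constant term in x is u. Then in the ring A((u))[[x]] of power series in x over the Laurent series ring A((u)), the element F(u, x) is invertible, and if 1/F(u, x) = Σ_{i ≥ 0} dᵢ xⁱ with dᵢ ∈ A((u)), and one writes dᵢ = Σ_{j ∈ ℤ} c_{i,j} uʲ, then c_{i,j} = 0 whenever j < −i − 1. -/
/-!
Write `f = F(u, x) = Σᵢ fᵢ xⁱ`. Then `f₀ = F(u, 0) = u` is a unit of `A((u))` and every `fᵢ`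
lies in `A[[u]]`, so `f` is invertible, and comparing coefficients of `xⁱ` in `f * d = 1` gives
`u dᵢ = δᵢ₀ - Σ_{k < i} f_{i-k} d_k`. By induction the right side has `u`-adic order at least
`-i`, hence `dᵢ` has order at least `-i - 1`.
-/

/-- `stmt4PowCoeff a m i j` is the coefficient of `yⁱ zʲ` in `F(y,z)^m`, where
`F(y,z) = Σ a i j yⁱ zʲ` is a two-variable power series with coefficients `a`. -/
def stmt4PowCoeff {A : Type*} [CommRing A] (a : ℕ → ℕ → A) : ℕ → ℕ → ℕ → A
  | 0, i, j => if i = 0 ∧ j = 0 then 1 else 0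
  | m + 1, i, j => ∑ p ∈ Finset.range (i + 1), ∑ q ∈ Finset.range (j + 1),
      stmt4PowCoeff a m p q * a (i - p) (j - q)

/-- `F(u,x)` viewed as a power series in `x` over the Laurent series ring `A((u))`:
its coefficient of `xⁱ` is the power series `Σₘ a m i uᵐ ∈ A[[u]] ⊆ A((u))`. -/
noncomputable def stmt4Fux {A : Type*} [CommRing A] (a : ℕ → ℕ → A) :
    PowerSeries (LaurentSeries A) :=
  PowerSeries.mk fun i => HahnSeries.ofPowerSeries ℤ A (PowerSeries.mk fun m => a m i)

open PowerSeries HahnSeries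

theorem HahnSeries.isUnit_single_one {Γ R : Type*} [AddCommGroup Γ] [LinearOrder Γ]
    [IsOrderedAddMonoid Γ] [Semiring R] (g : Γ) : IsUnit (single g (1 : R)) :=
  ⟨⟨single g 1, single (-g) 1, by rw [single_mul_single, add_neg_cancel, mul_one, single_zero_one],
    by rw [single_mul_single, neg_add_cancel, mul_one, single_zero_one]⟩, rfl⟩

theorem HahnSeries.le_orderTop_of_le_orderTop_single_one_mul {Γ R : Type*} [AddCommGroup Γ]
    [LinearOrder Γ] [IsOrderedAddMonoid Γ] [Semiring R] {x : R⟦Γ⟧} {c g : Γ}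
    (h : ((c + g : Γ) : WithTop Γ) ≤ (single g 1 * x).orderTop) : (c : WithTop Γ) ≤ x.orderTop :=
  le_orderTop_iff_forall.2 fun j hj => by
    have hjg : ((j + g : Γ) : WithTop Γ) < (single g 1 * x).orderTop :=
      (WithTop.coe_lt_coe.2 (add_lt_add_left (WithTop.coe_lt_coe.1 hj) g)).trans_le h
    simpa only [coeff_single_mul_add, one_mul] using coeff_eq_zero_of_lt_orderTop hjg

theorem LaurentSeries.orderTop_ofPowerSeries_nonneg {R : Type*} [Semiring R] (f : R⟦X⟧) :
    0 ≤ (ofPowerSeries ℤ R f).orderTop :=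
  le_orderTop_iff_forall.2 fun j hj => by
    rw [PowerSeries.coeff_coe, if_pos (by exact_mod_cast hj)]

theorem LaurentSeries.le_orderTop_coeff_of_mul_eq_one {R : Type*} [Ring R]
    {f d : PowerSeries (LaurentSeries R)} (hf₀ : constantCoeff f = single 1 1)
    (hf : ∀ k, 0 ≤ (coeff k f).orderTop) (hfd : f * d = 1) (i : ℕ) :
    ((-(i : ℤ) - 1 : ℤ) : WithTop ℤ) ≤ (coeff i d).orderTop := by
  induction i using Nat.strong_induction_on with
  | _ i ih =>
  have hsolve : single 1 1 * coeff i d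
      = coeff i (1 : PowerSeries (LaurentSeries R))
        - ∑ k ∈ Finset.range i, coeff (k + 1) f * coeff (i - (k + 1)) d := by
    rw [← hfd, PowerSeries.coeff_mul, Finset.Nat.sum_antidiagonal_eq_sum_range_succ
      (fun p q => coeff p f * coeff q d), Finset.sum_range_succ', coeff_zero_eq_constantCoeff_apply,
      hf₀, Nat.sub_zero, add_sub_cancel_left]
  refine le_orderTop_of_le_orderTop_single_one_mul (g := 1) ?_
  rw [sub_add_cancel, hsolve]
  refine (le_min ?_ ?_).trans min_orderTop_le_orderTop_sub
  · have hone : (0 : WithTop ℤ) ≤ (coeff i (1 : PowerSeries (LaurentSeries R))).orderTop := by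
      rw [PowerSeries.coeff_one]
      split_ifs
      exacts [(single_zero_one (Γ := ℤ) (R := R)) ▸ orderTop_single_le, by simp]
    exact le_trans (by exact_mod_cast (by omega : -(i : ℤ) ≤ 0)) hone
  · refine Finset.sum_induction _ (fun x : LaurentSeries R => ((-i : ℤ) : WithTop ℤ) ≤ x.orderTop)
      (fun x y hx hy => (le_min hx hy).trans min_orderTop_le_orderTop_add) (by simp) ?_
    intro k hk
    have hk : k < i := Finset.mem_range.1 hk
    calc ((-i : ℤ) : WithTop ℤ)
        ≤ ((0 + (-((i - (k + 1) : ℕ) : ℤ) - 1) : ℤ) : WithTop ℤ) := by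
          exact_mod_cast (by omega)
      _ = 0 + ((-((i - (k + 1) : ℕ) : ℤ) - 1 : ℤ) : WithTop ℤ) := WithTop.coe_add _ _
      _ ≤ (coeff (k + 1) f).orderTop + (coeff (i - (k + 1)) d).orderTop :=
          add_le_add (hf _) (ih _ (by omega))
      _ ≤ _ := orderTop_add_le_mul

theorem constantCoeff_stmt4Fux {A : Type*} [CommRing A] (a : ℕ → ℕ → A)
    (hy : ∀ i, a i 0 = if i = 1 then 1 else 0) : constantCoeff (stmt4Fux a) = single 1 1 := by
  have hX : (PowerSeries.mk fun m => a m 0) = X := by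
    ext m
    simp [hy m, PowerSeries.coeff_X]
  rw [← coeff_zero_eq_constantCoeff_apply, stmt4Fux, coeff_mk, hX, ofPowerSeries_X]

theorem orderTop_coeff_stmt4Fux_nonneg {A : Type*} [CommRing A] (a : ℕ → ℕ → A) (k : ℕ) :
    0 ≤ (coeff k (stmt4Fux a)).orderTop := by
  rw [stmt4Fux, coeff_mk]
  exact LaurentSeries.orderTop_ofPowerSeries_nonneg _

theorem stmt_4_general {A : Type*} [CommRing A] (a : ℕ → ℕ → A)
    (hy : ∀ i, a i 0 = if i = 1 then 1 else 0) :
    IsUnit (stmt4Fux a) ∧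
    ∀ d : PowerSeries (LaurentSeries A), stmt4Fux a * d = 1 →
      ∀ (i : ℕ) (j : ℤ), j < -(i : ℤ) - 1 →
        (PowerSeries.coeff i d).coeff j = 0 := by
  have hf₀ := constantCoeff_stmt4Fux a hy
  refine ⟨isUnit_iff_constantCoeff.2 (hf₀ ▸ isUnit_single_one 1), fun d hd i j hj => ?_⟩
  have hd_order := LaurentSeries.le_orderTop_coeff_of_mul_eq_one hf₀
    (orderTop_coeff_stmt4Fux_nonneg a) hd i
  exact coeff_eq_zero_of_lt_orderTop ((WithTop.coe_lt_coe.2 hj).trans_le hd_order)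

/-- Let `F(y,z) = Σ a i j yⁱ zʲ` be a formal group law over a commutative ring `A`
(identity axioms `F(y,0) = y`, `F(0,z) = z`, commutativity, and associativity, stated
coefficientwise; associativity compares the coefficients of `yⁱ zʲ wᵏ` in `F(F(y,z),w)`
and `F(y,F(z,w))`).  Then `F(u,x)` is invertible in `A((u))[[x]]`, and if
`1/F(u,x) = Σᵢ dᵢ xⁱ` with `dᵢ = Σⱼ c_{i,j} uʲ ∈ A((u))`, then `c_{i,j} = 0`
whenever `j < -i - 1`. -/
theorem stmt_4 {A : Type*} [CommRing A] (a : ℕ → ℕ → A)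
    (hy : ∀ i, a i 0 = if i = 1 then 1 else 0)
    (hz : ∀ j, a 0 j = if j = 1 then 1 else 0)
    (hcomm : ∀ i j, a i j = a j i)
    (hassoc : ∀ i j k : ℕ,
      ∑ m ∈ Finset.range (i + j + 1), a m k * stmt4PowCoeff a m i j
        = ∑ n ∈ Finset.range (j + k + 1), a i n * stmt4PowCoeff a n j k) :
    IsUnit (stmt4Fux a) ∧
    ∀ d : PowerSeries (LaurentSeries A), stmt4Fux a * d = 1 →
      ∀ (i : ℕ) (j : ℤ), j < -(i : ℤ) - 1 →
        (PowerSeries.coeff i d).coeff j = 0 :=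
  stmt_4_general a hy
end

section
/- Let A be a commutative ring and let f(x) = x + b₁x² + b₂x³ + ⋯ ∈ A[[x]] be a power series with zero constant term and linear coefficient 1, with compositional inverse g(x) = x + m₁x² + m₂x³ + ⋯ (so f(g(x)) = x). Then for every k ≥ 1, the coefficient of x^{k−1} in the power series 1/(1 + b₁x + b₂x² + ⋯)^k equals k·m_{k−1} (with the convention m₀ = 1). -/
/-!
Write `f = X F`, `g = X G` and `H = G⁻¹`. Substituting `g` into `f = X F` turns `f ∘ g = X`
into `F ∘ g = H`, so `w = F⁻ᵏ` satisfies `w ∘ g = Gᵏ`. On the other hand every `P` satisfies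
`[X^{k-1}] P = [X^{k-1}] (P ∘ g) Hᵏ g'`: this is the invariance of the residue of `P / Xᵏ` under
the change of variables `X ↦ g`, and it reduces to `[Xᵘ] H^{u+1} g' = δ_{u,0}`, the residue of
`g' / g^{u+1}`. For `P = w` the right-hand side is `[X^{k-1}] g' = k [Xᵏ] g`.
-/

open PowerSeries Finset

namespace LagrangeInversion

variable {A : Type*} [CommRing A]

theorem derivative_map {B : Type*} [CommRing B] (φ : A →+* B) (F : A⟦X⟧) :
    d⁄dX B (map φ F) = map φ (d⁄dX A F) := by
  ext n
  simp [coeff_derivative]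

theorem coeff_succ_pow_succ_of_charZero {R : Type*} [CommRing R] [IsDomain R] [CharZero R]
    (H : R⟦X⟧) (v : ℕ) :
    coeff (v + 1) (H ^ (v + 1)) = coeff v (H ^ v * d⁄dX R H) := by
  have h := congrArg (coeff v) (derivative_pow H (v + 1))
  rw [coeff_derivative, ← map_natCast (C (R := R)), mul_assoc, coeff_C_mul,
    Nat.add_sub_cancel, mul_comm, Nat.cast_succ] at h
  exact mul_left_cancel₀ (Nat.cast_add_one_ne_zero v) h

/-- Both sides are integer polynomials in the coefficients of `H`, so it suffices to prove the
identity for the generic series `∑ xₙ Xⁿ` over `ℤ[x₀, x₁, …]`, where `v + 1` can be cancelled. -/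
theorem coeff_succ_pow_succ (H : A⟦X⟧) (v : ℕ) :
    coeff (v + 1) (H ^ (v + 1)) = coeff v (H ^ v * d⁄dX A H) := by
  let φ : MvPolynomial ℕ ℤ →+* A := MvPolynomial.eval₂Hom (Int.castRingHom A) (coeff · H)
  have hH : map φ (mk MvPolynomial.X) = H := by ext n; simp [φ]
  rw [← hH, derivative_map]
  simpa only [← map_pow, ← map_mul, coeff_map] using
    congrArg φ (coeff_succ_pow_succ_of_charZero (mk MvPolynomial.X) v)

section Residue

variable {G H : A⟦X⟧} (hGH : G * H = 1)
include hGH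

theorem coeff_pow_succ_mul_derivative (u : ℕ) :
    coeff u (H ^ (u + 1) * d⁄dX A (X * G)) = if u = 0 then 1 else 0 := by
  have hD : H * d⁄dX A G = -(G * d⁄dX A H) := by
    have := congrArg (d⁄dX A) hGH
    rw [Derivation.leibniz, Derivation.map_one_eq_zero, smul_eq_mul, smul_eq_mul] at this
    linear_combination this
  rw [Derivation.leibniz, derivative_X, smul_eq_mul, smul_eq_mul, mul_one]
  cases u with
  | zero =>
    rw [show H ^ (0 + 1) * (X * d⁄dX A G + G) = G * H + X * (H * d⁄dX A G) by ring, hGH]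
    simp
  | succ v =>
    have hsplit :
        H ^ (v + 1 + 1) * (X * d⁄dX A G + G) = H ^ (v + 1) - X * (H ^ v * d⁄dX A H) := by
      linear_combination (H ^ (v + 1) - X * H ^ v * d⁄dX A H) * hGH + X * H ^ (v + 1) * hD
    rw [hsplit, map_sub, coeff_succ_X_mul, coeff_succ_pow_succ, sub_self, if_neg v.succ_ne_zero]

theorem coeff_X_mul_pow_mul_pow_mul_derivative {n K : ℕ} (hn : n ≤ K) :
    coeff K ((X * G) ^ n * (H ^ (K + 1) * d⁄dX A (X * G))) = if n = K then 1 else 0 := by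
  obtain ⟨u, rfl⟩ := Nat.exists_eq_add_of_le hn
  have hcancel : (X * G) ^ n * (H ^ (n + u + 1) * d⁄dX A (X * G))
      = X ^ n * (H ^ (u + 1) * d⁄dX A (X * G)) := by
    calc _ = X ^ n * ((G * H) ^ n * (H ^ (u + 1) * d⁄dX A (X * G))) := by ring
      _ = _ := by rw [hGH, one_pow, one_mul]
  rw [hcancel, add_comm, coeff_X_pow_mul, coeff_pow_succ_mul_derivative hGH]
  simp

end Residue

theorem coeff_subst_X_mul (G P : A⟦X⟧) {n N : ℕ} (h : n < N) :
    coeff n (P.subst (X * G)) = ∑ d ∈ range N, coeff d P * coeff n ((X * G) ^ d) := by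
  rw [coeff_subst' (HasSubst.of_constantCoeff_zero' (by simp))]
  refine finsum_eq_sum_of_support_subset _ fun d hd => ?_
  by_contra hdN
  rw [coe_range, Set.mem_Iio, not_lt] at hdN
  exact hd (by simp only [mul_pow, coeff_X_pow_mul', if_neg (show ¬d ≤ n by omega), smul_zero])

theorem coeff_subst_X_mul_mul (G P M : A⟦X⟧) (N : ℕ) :
    coeff N (P.subst (X * G) * M) =
      ∑ d ∈ range (N + 1), coeff d P * coeff N ((X * G) ^ d * M) := by
  simp only [coeff_mul, mul_sum]
  rw [sum_comm]
  refine sum_congr rfl fun p hp => ?_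
  rw [coeff_subst_X_mul G P (Nat.antidiagonal.fst_lt hp), sum_mul]
  exact sum_congr rfl fun d _ => mul_assoc _ _ _

theorem coeff_subst_mul_pow_mul_derivative {G H : A⟦X⟧} (hGH : G * H = 1) (P : A⟦X⟧) (K : ℕ) :
    coeff K (P.subst (X * G) * (H ^ (K + 1) * d⁄dX A (X * G))) = coeff K P := by
  rw [coeff_subst_X_mul_mul, sum_congr rfl fun d hd => by
    rw [coeff_X_mul_pow_mul_pow_mul_derivative hGH (mem_range_succ_iff.mp hd)]]
  simp

end LagrangeInversion

open LagrangeInversion in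
theorem stmt_5_general {A : Type*} [CommRing A] (f g : PowerSeries A)
    (hf0 : PowerSeries.coeff 0 f = 0)
    (hg0 : PowerSeries.coeff 0 g = 0) (hg1 : PowerSeries.coeff 1 g = 1)
    (hcomp : ∀ k : ℕ, ∑ n ∈ Finset.range (k + 1),
        PowerSeries.coeff n f * PowerSeries.coeff k (g ^ n)
      = if k = 1 then 1 else 0) :
    ∀ k : ℕ, 1 ≤ k → ∀ w : PowerSeries A,
      (PowerSeries.mk fun n => PowerSeries.coeff (n + 1) f) ^ k * w = 1 →
      PowerSeries.coeff (k - 1) w = (k : A) * PowerSeries.coeff k g := by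
  intro k hk w hw
  obtain ⟨K, rfl⟩ : ∃ K, k = K + 1 := ⟨k - 1, by omega⟩
  obtain ⟨F, rfl⟩ := X_dvd_iff.mpr (by simpa using hf0)
  obtain ⟨G, rfl⟩ := X_dvd_iff.mpr (by simpa using hg0)
  obtain ⟨H, hGH⟩ : ∃ H, G * H = 1 :=
    ⟨invOfUnit G 1, mul_invOfUnit G 1 (by simpa [coeff_succ_X_mul] using hg1)⟩
  have hsubst : HasSubst (X * G) := HasSubst.of_constantCoeff_zero' (by simp)
  have hfg : (X * F).subst (X * G) = X := by
    ext n
    rw [coeff_subst_X_mul G _ n.lt_succ_self, hcomp, coeff_X]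
  have hFG : G * F.subst (X * G) = 1 := by
    refine X_mul_cancel ?_
    calc X * (G * F.subst (X * G)) = (X * F).subst (X * G) := by
          rw [subst_mul hsubst, subst_X hsubst, mul_assoc]
      _ = X * 1 := by rw [hfg, mul_one]
  have hwg : w.subst (X * G) = G ^ (K + 1) := by
    have hF : (mk fun n => coeff (n + 1) (X * F)) = F := by ext; simp [coeff_succ_X_mul]
    have h := congrArg (substAlgHom hsubst) hw
    rw [hF, map_mul, map_pow, map_one, coe_substAlgHom] at h
    calc w.subst (X * G) = (G * F.subst (X * G)) ^ (K + 1) * w.subst (X * G) := by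
          rw [hFG, one_pow, one_mul]
      _ = G ^ (K + 1) := by rw [mul_pow, mul_assoc, h, mul_one]
  calc coeff (K + 1 - 1) w
      = coeff K (w.subst (X * G) * (H ^ (K + 1) * d⁄dX A (X * G))) :=
        (coeff_subst_mul_pow_mul_derivative hGH w K).symm
    _ = coeff K (d⁄dX A (X * G)) := by rw [hwg, ← mul_assoc, ← mul_pow, hGH, one_pow, one_mul]
    _ = (K + 1 : ℕ) * coeff (K + 1) (X * G) := by rw [coeff_derivative]; push_cast; ring

/-- Lagrange inversion (Mischenko's formula): let `f = x + b₁x² + ⋯ ∈ A[[x]]` with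
compositional inverse `g = x + m₁x² + ⋯` (so `f(g(x)) = x`, stated coefficientwise:
the coefficient of `xᵏ` in `Σₙ fₙ gⁿ` is `δ_{k,1}`, a finite sum since `g(0) = 0`).
Then for every `k ≥ 1`, the coefficient of `x^{k-1}` in `1/(1 + b₁x + b₂x² + ⋯)ᵏ`
equals `k · m_{k-1}`, where `1 + b₁x + ⋯ = f/x` and `m_{k-1}` is the coefficient of
`xᵏ` in `g` (with `m₀ = 1`). -/
theorem stmt_5 {A : Type*} [CommRing A] (f g : PowerSeries A)
    (hf0 : PowerSeries.coeff 0 f = 0) (hf1 : PowerSeries.coeff 1 f = 1)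
    (hg0 : PowerSeries.coeff 0 g = 0) (hg1 : PowerSeries.coeff 1 g = 1)
    (hcomp : ∀ k : ℕ, ∑ n ∈ Finset.range (k + 1),
        PowerSeries.coeff n f * PowerSeries.coeff k (g ^ n)
      = if k = 1 then 1 else 0) :
    ∀ k : ℕ, 1 ≤ k → ∀ w : PowerSeries A,
      (PowerSeries.mk fun n => PowerSeries.coeff (n + 1) f) ^ k * w = 1 →
      PowerSeries.coeff (k - 1) w = (k : A) * PowerSeries.coeff k g :=
  stmt_5_general f g hf0 hg0 hg1 hcomp
end

section
/- Let A be a commutative ring, D a cocommutative coassociative counital A-coalgebra with counit ε, and x : D → A an A-linear functional. Define the cap product d ∩ x = (1 ⊗ x)(Δd) ∈ D. Suppose there is given an element β₁ ∈ D with ε(β₁) = 1 and β₁ ∩ x = 0, and suppose the sequence 0 → A →η D →∩x D → 0 is exact, where η(a) = a·β₁ (so ∩x is surjective with kernel A·β₁, and a ↦ a·β₁ is injective). Then for every n ≥ 1 there is a unique family of elements β₁, β₂, …, βₙ ∈ D such that β_{k+1} ∩ x = β_k for all 1 ≤ k < n and ε(β_k) = 0 for all 2 ≤ k ≤ n. 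-/
open TensorProduct

/-- The cap product `d ∩ x = (1 ⊗ x)(Δ d)` of `d ∈ D` with an `A`-linear functional
`x` on a coalgebra `D`, as a linear endomorphism of `D`. -/
noncomputable def stmt11Cap {A D : Type*} [CommRing A] [AddCommGroup D] [Module A D]
    [Coalgebra A D] (x : D →ₗ[A] A) : D →ₗ[A] D :=
  (TensorProduct.rid A D).toLinearMap ∘ₗ (LinearMap.lTensor D x) ∘ₗ Coalgebra.comul

/-- Let `D` be a cocommutative counital `A`-coalgebra, `x : D → A` a linear functional,
`β₁ ∈ D` with `ε(β₁) = 1` and `β₁ ∩ x = 0`, and suppose `0 → A → D →(∩x) D → 0` is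
exact (`a ↦ a β₁` injective, its image is `ker(∩x)`, and `∩x` surjective).  Then for
every `n ≥ 1` there exists a family `β₁, …, βₙ`, with `β_{k+1} ∩ x = β_k` for
`1 ≤ k < n` and `ε(β_k) = 0` for `2 ≤ k ≤ n`, and any two such families agree. -/
theorem stmt_11 {A D : Type*} [CommRing A] [AddCommGroup D] [Module A D] [Coalgebra A D]
    (hcocomm : ∀ d : D, TensorProduct.comm A D D (Coalgebra.comul d) = Coalgebra.comul d)
    (x : D →ₗ[A] A) (β₁ : D)
    (hβε : Coalgebra.counit (R := A) β₁ = 1) (hβx : stmt11Cap x β₁ = 0)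
    (hinj : Function.Injective fun a : A => a • β₁)
    (hker : ∀ d : D, stmt11Cap x d = 0 ↔ ∃ a : A, d = a • β₁)
    (hsurj : Function.Surjective (stmt11Cap x)) :
    ∀ n : ℕ, 1 ≤ n →
      ∃ β : ℕ → D, β 1 = β₁ ∧
        (∀ k, 1 ≤ k → k < n → stmt11Cap x (β (k + 1)) = β k) ∧
        (∀ k, 2 ≤ k → k ≤ n → Coalgebra.counit (R := A) (β k) = 0) ∧
        ∀ γ : ℕ → D,
          (γ 1 = β₁ ∧ (∀ k, 1 ≤ k → k < n → stmt11Cap x (γ (k + 1)) = γ k) ∧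
            (∀ k, 2 ≤ k → k ≤ n → Coalgebra.counit (R := A) (γ k) = 0)) →
          ∀ k, 1 ≤ k → k ≤ n → γ k = β k := by
  intro n hn
  have hg : ∀ d : D, ∃ e : D, stmt11Cap x e = d ∧ Coalgebra.counit (R := A) e = 0 := by
    intro d
    obtain ⟨e, he⟩ := hsurj d
    refine ⟨e - Coalgebra.counit (R := A) e • β₁, ?_, ?_⟩
    · simp [map_sub, map_smul, he, hβx]
    · simp [map_sub, map_smul, hβε]
  choose g hg1 hg2 using hg
  set β : ℕ → D := fun m => Nat.rec 0 (fun k ih => if k = 0 then β₁ else g ih) m with hβdef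
  have hβ1 : β 1 = β₁ := rfl
  have hβs : ∀ k, 1 ≤ k → β (k + 1) = g (β k) := by
    intro k hk
    have hk0 : k ≠ 0 := by omega
    simp [hβdef, hk0]
  refine ⟨β, hβ1, ?_, ?_, ?_⟩
  · intro k hk _
    rw [hβs k hk]; exact hg1 _
  · intro k hk _
    obtain ⟨m, rfl⟩ : ∃ m, k = m + 1 := ⟨k - 1, by omega⟩
    rw [hβs m (by omega)]; exact hg2 _
  · rintro γ ⟨hγ1, hγs, hγε⟩ k hk hkn
    induction k with
    | zero => omega
    | succ m ih =>
      rcases Nat.lt_or_ge m 1 with h1 | hm1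
      · have : m = 0 := by omega
        subst this
        exact hγ1.trans hβ1.symm
      · have ihm := ih hm1 (by omega)
        have hdiff : stmt11Cap x (γ (m + 1) - β (m + 1)) = 0 := by
          rw [map_sub, hγs m hm1 (by omega), hβs m hm1, hg1, ihm, sub_self]
        obtain ⟨a, ha⟩ := (hker _).mp hdiff
        have hεd : Coalgebra.counit (R := A) (γ (m + 1) - β (m + 1)) = 0 := by
          rw [map_sub, hγε (m + 1) (by omega) hkn, hβs m hm1, hg2, sub_zero]
        rw [ha, map_smul, hβε, smul_eq_mul, mul_one] at hεd
        rw [hεd, zero_smul] at ha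
        exact sub_eq_zero.mp ha
end

section
/- Let A be a commutative ring, M an A-module with countable basis (βₙ)_{n ≥ 1}, and let M* = Hom_A(M, A). Then the natural evaluation map M → Hom^{cts}_A(M*, A) is an isomorphism of A-modules, where M* is given the product topology via the identification M* ≅ ∏_{n≥1} A (sending a functional f to the sequence (f(βₙ))), and Hom^{cts} denotes A-linear maps M* → A that factor through a finite sub-product, i.e. depend on only finitely many coordinates. -/
/-!
Expanding `m` in the basis shows that `f m` only depends on the finitely many values `f (b n)`
with `n` in the support of `b.repr m`, and the coordinate functionals separate points.
Conversely, if `φ` kills every functional vanishing on `b 0, …, b (N-1)`, then it cannot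
distinguish `f` from its truncation `∑_{n<N} f (b n) • b.coord n`, so `φ` is evaluation at
`∑_{n<N} φ (b.coord n) • b n`.
-/

namespace Module.Basis

variable {ι R M : Type*} [AddCommMonoid M]

section Semiring

variable [Semiring R] [Module R M]

theorem linearMap_apply_eq_zero_of_forall_mem_support (b : Basis ι R M) {m : M}
    {f : M →ₗ[R] R} (hf : ∀ i ∈ (b.repr m).support, f (b i) = 0) : f m = 0 := by
  rw [← b.linearCombination_repr m, Finsupp.linearCombination_apply, map_finsuppSum]
  exact Finset.sum_eq_zero fun i hi => show f (_ • b i) = 0 by rw [map_smul, hf i hi, smul_zero]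

theorem eq_of_forall_linearMap_apply_eq (b : Basis ι R M) {m m' : M}
    (h : ∀ f : M →ₗ[R] R, f m = f m') : m = m' :=
  b.ext_elem fun i => h (b.coord i)

end Semiring

section CommRing

variable [CommRing R] [Module R M] [DecidableEq ι]

theorem linearMap_sub_sum_coord_apply_self (b : Basis ι R M) (f : M →ₗ[R] R) {s : Finset ι}
    {k : ι} (hk : k ∈ s) : (f - ∑ n ∈ s, f (b n) • b.coord n) (b k) = 0 := by
  simp [Finsupp.single_apply, hk]

theorem apply_eq_linearMap_apply_sum_of_vanishing (b : Basis ι R M) {s : Finset ι}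
    {φ : (M →ₗ[R] R) →ₗ[R] R} (hφ : ∀ f : M →ₗ[R] R, (∀ i ∈ s, f (b i) = 0) → φ f = 0)
    (f : M →ₗ[R] R) : φ f = f (∑ i ∈ s, φ (b.coord i) • b i) := by
  have htrunc := hφ _ fun k hk => b.linearMap_sub_sum_coord_apply_self f hk
  rw [map_sub, sub_eq_zero] at htrunc
  simp [htrunc, mul_comm]

end CommRing

end Module.Basis

/-- Let `M` be an `A`-module with countable basis `(bₙ)` and `M* = Hom_A(M, A)`.
Call a functional `φ : M* → A` continuous if it depends on only finitely many
coordinates of `M* ≅ ∏ₙ A` (i.e. `∃ N, φ f = 0` whenever `f(bₙ) = 0` for all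
`n < N`).  Then the evaluation map `m ↦ ev_m : M → Hom^{cts}_A(M*, A)` is an
isomorphism: each `ev_m` is continuous, the map is injective, and every continuous
functional on `M*` is an evaluation. -/
theorem stmt_15 {A M : Type*} [CommRing A] [AddCommGroup M] [Module A M]
    (b : Module.Basis ℕ A M) :
    (∀ m : M, ∃ N : ℕ, ∀ f : M →ₗ[A] A, (∀ n < N, f (b n) = 0) → f m = 0) ∧
    (∀ m m' : M, (∀ f : M →ₗ[A] A, f m = f m') → m = m') ∧
    (∀ φ : (M →ₗ[A] A) →ₗ[A] A,
      (∃ N : ℕ, ∀ f : M →ₗ[A] A, (∀ n < N, f (b n) = 0) → φ f = 0) →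
      ∃ m : M, ∀ f : M →ₗ[A] A, φ f = f m) := by
  refine ⟨fun m => ?_, fun m m' => b.eq_of_forall_linearMap_apply_eq, ?_⟩
  · obtain ⟨N, hN⟩ := Finset.exists_nat_subset_range (b.repr m).support
    exact ⟨N, fun f hf => b.linearMap_apply_eq_zero_of_forall_mem_support fun n hn =>
      hf n (Finset.mem_range.mp (hN hn))⟩
  · rintro φ ⟨N, hN⟩
    exact ⟨_, b.apply_eq_linearMap_apply_sum_of_vanishing (s := Finset.range N)
      fun f hf => hN f fun n hn => hf n (Finset.mem_range.mpr hn)⟩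
end
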